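/- arXiv:1308.3480 — 10 statements merged into one kernel-verified Lean document; each statement's English description precedes it below -/
import Mathlib

section
/- Let A be an associative algebra over a field F, let q ∈ F be nonzero with q² ≠ 1, and let u, v ∈ A satisfy q*u*v - q⁻¹*v*u = (q - q⁻¹)*1. If u is invertible, then [u⁻¹, [u, v]] = (q - q⁻¹)² * (u⁻¹ - v), where [a,b] = a*b - b*a. -/
theorem stmt_1 {F : Type*} [Field F] {A : Type*} [Ring A] [Algebra F A]
    (q : F) (hq : q ≠ 0) (hq2 : q ^ 2 ≠ 1) (u v : A)
    (h : q • (u * v) - q⁻¹ • (v * u) = (q - q⁻¹) • (1 : A))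
    (w : A) (huw : u * w = 1) (hwu : w * u = 1) :
    w * (u * v - v * u) - (u * v - v * u) * w = ((q - q⁻¹) ^ 2) • (w - v) := by
  have E1 : q • v - q⁻¹ • (w * (v * u)) = (q - q⁻¹) • w := by
    have := congrArg (fun x => w * x) h
    simpa [mul_sub, mul_smul_comm, ← mul_assoc, hwu] using this
  have E2 : q • (u * v * w) - q⁻¹ • v = (q - q⁻¹) • w := by
    have := congrArg (fun x => x * w) h
    simpa [sub_mul, smul_mul_assoc, mul_assoc, huw] using this
  have h1 : w * (v * u) = (q ^ 2) • v - (q * (q - q⁻¹)) • w := by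
    have := congrArg (fun x => q • x) E1
    simp only [smul_sub, smul_smul, mul_inv_cancel₀ hq, one_smul] at this
    have : w * (v * u) = (q * q) • v - (q * (q - q⁻¹)) • w := by
      linear_combination (norm := module) -this
    simpa [pow_two] using this
  have h2 : u * v * w = (q⁻¹ * (q - q⁻¹)) • w + (q⁻¹ * q⁻¹) • v := by
    have := congrArg (fun x => q⁻¹ • x) E2
    simp only [smul_sub, smul_smul, inv_mul_cancel₀ hq, one_smul] at this
    linear_combination (norm := module) this
  calc w * (u * v - v * u) - (u * v - v * u) * w
      = w * u * v - w * (v * u) - u * v * w + v * (u * w) := by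
        rw [mul_sub, sub_mul, mul_assoc v u w, ← mul_assoc w u v]; abel
    _ = v - ((q ^ 2) • v - (q * (q - q⁻¹)) • w)
        - ((q⁻¹ * (q - q⁻¹)) • w + (q⁻¹ * q⁻¹) • v) + v := by
        rw [hwu, huw, h1, h2, one_mul, mul_one]
    _ = ((q - q⁻¹) ^ 2) • (w - v) := by
        match_scalars <;> field_simp <;> ring
end

section
/- Let A be an associative algebra over a field F, let q ∈ F be nonzero with q² ≠ 1, and let u, v ∈ A satisfy q*u*v - q⁻¹*v*u = (q - q⁻¹)*1. If v is invertible, then [[u, v], v⁻¹] = (q - q⁻¹)² * (v⁻¹ - u). -/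
theorem stmt_2 {F : Type*} [Field F] {A : Type*} [Ring A] [Algebra F A]
    (q : F) (hq : q ≠ 0) (hq2 : q ^ 2 ≠ 1) (u v : A)
    (h : q • (u * v) - q⁻¹ • (v * u) = (q - q⁻¹) • (1 : A))
    (w : A) (hvw : v * w = 1) (hwv : w * v = 1) :
    (u * v - v * u) * w - w * (u * v - v * u) = ((q - q⁻¹) ^ 2) • (w - u) := by
  have h1 : q • u - q⁻¹ • (v * u * w) = (q - q⁻¹) • w := by
    have := congrArg (· * w) h
    simpa [sub_mul, smul_mul_assoc, mul_assoc, hvw] using this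
  have h2 : q • (w * (u * v)) - q⁻¹ • u = (q - q⁻¹) • w := by
    have := congrArg (w * ·) h
    simpa [mul_sub, mul_smul_comm, ← mul_assoc, hwv] using this
  have hA : v * u * w = (q ^ 2) • u - (q * (q - q⁻¹)) • w := by
    have := congrArg (q • ·) h1
    simp only [smul_sub, smul_smul, mul_inv_cancel₀ hq, one_smul] at this
    rw [← this]; module
  have hB : w * (u * v) = (q⁻¹ * (q - q⁻¹)) • w + (q⁻¹ * q⁻¹) • u := by
    have := congrArg (q⁻¹ • ·) h2
    simp only [smul_sub, smul_smul, inv_mul_cancel₀ hq, one_smul] at this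
    rw [← this]; module
  have expand : (u * v - v * u) * w - w * (u * v - v * u)
      = u * (v * w) - v * u * w - w * (u * v) + w * v * u := by
    noncomm_ring
  rw [expand, hvw, hwv, mul_one, one_mul, hA, hB]
  match_scalars <;> field_simp <;> ring
end

section
/- Let A be an associative algebra over a field F, let q ∈ F be nonzero with q² ≠ 1, and let u, v, w ∈ A satisfy q*u*v - q⁻¹*v*u = (q - q⁻¹)*1 and q*v*w - q⁻¹*w*v = (q - q⁻¹)*1. Then [v, [u, w]] = (q - q⁻¹)² * (u - w). -/
theorem stmt_4 {F : Type*} [Field F] {A : Type*} [Ring A] [Algebra F A]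
    (q : F) (hq : q ≠ 0) (hq2 : q ^ 2 ≠ 1) (u v w : A)
    (h1 : q • (u * v) - q⁻¹ • (v * u) = (q - q⁻¹) • (1 : A))
    (h2 : q • (v * w) - q⁻¹ • (w * v) = (q - q⁻¹) • (1 : A)) :
    v * (u * w - w * u) - (u * w - w * u) * v = ((q - q⁻¹) ^ 2) • (u - w) := by
  have hvu : v * u = (q ^ 2) • (u * v) - (q ^ 2 - 1) • (1 : A) := by
    have h := congrArg (fun x => q • x) h1
    simp only [smul_sub, smul_smul, mul_inv_cancel₀ hq, one_smul] at h
    have e1 : q * q = q ^ 2 := by ring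
    have e2 : q * (q - q⁻¹) = q ^ 2 - 1 := by field_simp
    rw [e1, e2] at h
    linear_combination (norm := module) -h
  have hwv : w * v = (q ^ 2) • (v * w) - (q ^ 2 - 1) • (1 : A) := by
    have h := congrArg (fun x => q • x) h2
    simp only [smul_sub, smul_smul, mul_inv_cancel₀ hq, one_smul] at h
    have e1 : q * q = q ^ 2 := by ring
    have e2 : q * (q - q⁻¹) = q ^ 2 - 1 := by field_simp
    rw [e1, e2] at h
    linear_combination (norm := module) -h
  have huv : u * v = (q⁻¹ ^ 2) • (v * u) + (1 - q⁻¹ ^ 2) • (1 : A) := by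
    have h := congrArg (fun x => q⁻¹ • x) h1
    simp only [smul_sub, smul_smul, inv_mul_cancel₀ hq, one_smul] at h
    have e1 : q⁻¹ * q⁻¹ = q⁻¹ ^ 2 := by ring
    have e2 : q⁻¹ * (q - q⁻¹) = 1 - q⁻¹ ^ 2 := by field_simp
    rw [e1, e2] at h
    linear_combination (norm := module) h
  have hvw : v * w = (q⁻¹ ^ 2) • (w * v) + (1 - q⁻¹ ^ 2) • (1 : A) := by
    have h := congrArg (fun x => q⁻¹ • x) h2
    simp only [smul_sub, smul_smul, inv_mul_cancel₀ hq, one_smul] at h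
    have e1 : q⁻¹ * q⁻¹ = q⁻¹ ^ 2 := by ring
    have e2 : q⁻¹ * (q - q⁻¹) = 1 - q⁻¹ ^ 2 := by field_simp
    rw [e1, e2] at h
    linear_combination (norm := module) h
  have t1 : v * (u * w) = (q ^ 2) • (u * (v * w)) - (q ^ 2 - 1) • w := by
    rw [← mul_assoc, hvu]
    simp only [sub_mul, smul_mul_assoc, one_mul, mul_assoc]
  have t2 : v * (w * u) = (q⁻¹ ^ 2) • (w * (v * u)) + (1 - q⁻¹ ^ 2) • u := by
    rw [← mul_assoc, hvw]
    simp only [add_mul, smul_mul_assoc, one_mul, mul_assoc]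
  have t3 : (u * w) * v = (q ^ 2) • (u * (v * w)) - (q ^ 2 - 1) • u := by
    rw [mul_assoc, hwv]
    simp only [mul_sub, mul_smul_comm, mul_one]
  have t4 : (w * u) * v = (q⁻¹ ^ 2) • (w * (v * u)) + (1 - q⁻¹ ^ 2) • w := by
    rw [mul_assoc, huv]
    simp only [mul_add, mul_smul_comm, mul_one]
  rw [mul_sub, sub_mul, t1, t2, t3, t4]
  match_scalars <;> field_simp <;> ring
end

section
/- Let F be a field, q ∈ F nonzero and not a root of unity, and d ≥ 1. Let T_q ∈ Mat_{d+1}(F) be the lower triangular matrix with (i,j)-entry (-1)^j q^{j(1-i)} [i choose j]_q for 0 ≤ j ≤ i ≤ d (and 0 otherwise), where [i choose j]_q denotes the Gaussian q-binomial coefficient defined via [n]_q = (q^n - q^{-n})/(q - q^{-1}). Then T_q * T_{q⁻¹} = I, i.e., the inverse of T_q is T_{q⁻¹}. -/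
/-- The symmetric q-integer `[n]_q = (q^n - q^{-n})/(q - q⁻¹)`. -/
def qInt {F : Type*} [Field F] (q : F) (n : ℕ) : F :=
  (q ^ n - q⁻¹ ^ n) / (q - q⁻¹)

/-- The q-factorial `[n]!_q`. -/
def qFact {F : Type*} [Field F] (q : F) : ℕ → F
  | 0 => 1
  | n + 1 => qInt q (n + 1) * qFact q n

/-- The Gaussian q-binomial coefficient `[n choose i]_q`. -/
def qBinom {F : Type*} [Field F] (q : F) (n i : ℕ) : F :=
  qFact q n / (qFact q i * qFact q (n - i))

/-- The lower triangular matrix `T_q` with `(i,j)`-entry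
`(-1)^j q^{j(1-i)} [i choose j]_q` for `j ≤ i`. -/
def Tmat {F : Type*} [Field F] (d : ℕ) (q : F) :
    Matrix (Fin (d + 1)) (Fin (d + 1)) F :=
  Matrix.of fun i j =>
    if (j : ℕ) ≤ (i : ℕ) then
      (-1) ^ (j : ℕ) * q ^ (((j : ℕ) : ℤ) * (1 - ((i : ℕ) : ℤ))) * qBinom q (i : ℕ) (j : ℕ)
    else 0

/-! Write `i = k + n` and `j = k + m`. Since `[i, j] [j, k] = [i, k] [n, m]`, the `(i, k)` entry of
`T_q T_{q⁻¹}` is `q^{-kn} [i, k]` times the `n`-th row sum `S(n) = ∑_m (-1)^m q^{m(1-n)} [n, m]`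
of `T_q`. The q-Pascal rule gives `S(n + 1) = (1 - q^{-2n}) S(n)`; as the factor vanishes at
`n = 0`, `S(n) = 0` for `n ≥ 1`, while `S(0) = 1`. -/

section

variable {F : Type*} [Field F] {q : F}

lemma qInt_inv (n : ℕ) : qInt q⁻¹ n = qInt q n := by
  rw [qInt, qInt, inv_inv, ← neg_sub, ← neg_sub q, neg_div_neg_eq]

lemma qFact_inv (n : ℕ) : qFact q⁻¹ n = qFact q n := by
  induction n with
  | zero => rfl
  | succ n ih => rw [qFact, qFact, qInt_inv, ih]

lemma qBinom_inv (n i : ℕ) : qBinom q⁻¹ n i = qBinom q n i := by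
  simp only [qBinom, qFact_inv]

lemma qInt_add (a b : ℕ) : qInt q (a + b) = q ^ a * qInt q b + q⁻¹ ^ b * qInt q a := by
  simp only [qInt, mul_div_assoc', ← add_div]
  ring

lemma qInt_ne_zero (hq : q ≠ 0) (hroot : ∀ n : ℕ, 0 < n → q ^ n ≠ 1) {n : ℕ}
    (hn : 0 < n) : qInt q n ≠ 0 := by
  have hsub : ∀ m, 0 < m → q ^ m - q⁻¹ ^ m ≠ 0 := fun m hm h => by
    refine hroot (2 * m) (by positivity) ?_
    rw [two_mul, pow_add]
    nth_rw 1 [sub_eq_zero.mp h]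
    rw [← mul_pow, inv_mul_cancel₀ hq, one_pow]
  exact div_ne_zero (hsub n hn) (by simpa using hsub 1 one_pos)

lemma qFact_ne_zero (hq : q ≠ 0) (hroot : ∀ n : ℕ, 0 < n → q ^ n ≠ 1) (n : ℕ) :
    qFact q n ≠ 0 := by
  induction n with
  | zero => exact one_ne_zero
  | succ n ih => exact mul_ne_zero (qInt_ne_zero hq hroot n.succ_pos) ih

lemma qBinom_zero_right (hq : q ≠ 0) (hroot : ∀ n : ℕ, 0 < n → q ^ n ≠ 1) (n : ℕ) :
    qBinom q n 0 = 1 := by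
  rw [qBinom, qFact, one_mul, Nat.sub_zero, div_self (qFact_ne_zero hq hroot n)]

lemma qBinom_self (hq : q ≠ 0) (hroot : ∀ n : ℕ, 0 < n → q ^ n ≠ 1) (n : ℕ) :
    qBinom q n n = 1 := by
  rw [qBinom, Nat.sub_self, qFact, mul_one, div_self (qFact_ne_zero hq hroot n)]

lemma qBinom_mul (hq : q ≠ 0) (hroot : ∀ n : ℕ, 0 < n → q ^ n ≠ 1) {n k s : ℕ}
    (hkn : k ≤ n) (hsk : s ≤ k) :
    qBinom q n k * qBinom q k s = qBinom q n s * qBinom q (n - s) (k - s) := by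
  have h := qFact_ne_zero hq hroot
  rw [qBinom, qBinom, qBinom, qBinom, show n - s - (k - s) = n - k by omega,
    div_mul_div_comm, div_mul_div_comm, div_eq_div_iff (by simp [h]) (by simp [h])]
  ring

lemma qBinom_succ_succ (hq : q ≠ 0) (hroot : ∀ n : ℕ, 0 < n → q ^ n ≠ 1) {n m : ℕ}
    (hmn : m < n) :
    qBinom q (n + 1) (m + 1) =
      q⁻¹ ^ (n - m) * qBinom q n m + q ^ (m + 1) * qBinom q n (m + 1) := by
  obtain ⟨t, rfl⟩ : ∃ t, n = m + 1 + t := ⟨n - m - 1, by omega⟩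
  have h := qFact_ne_zero hq hroot
  have hm := qInt_ne_zero hq hroot m.succ_pos
  have ht := qInt_ne_zero hq hroot t.succ_pos
  rw [qBinom, qBinom, qBinom, show m + 1 + t + 1 - (m + 1) = t + 1 by omega,
    show m + 1 + t - m = t + 1 by omega, show m + 1 + t - (m + 1) = t by omega,
    qFact.eq_2 q (m + 1 + t), qFact.eq_2 q m, qFact.eq_2 q t, add_assoc _ t,
    qInt_add (m + 1) (t + 1)]
  field_simp
  ring

-- The entry `(-1)^j q^{j(1-i)} [i, j]` of `T_q`, with the power of `q` split into natural powers.
def tEntry (q : F) (i j : ℕ) : F :=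
  (-1) ^ j * q ^ j * q⁻¹ ^ (j * i) * qBinom q i j

def tRowSum (q : F) (n : ℕ) : F :=
  ∑ j ∈ Finset.range (n + 1), tEntry q n j

lemma tEntry_zero_right (hq : q ≠ 0) (hroot : ∀ n : ℕ, 0 < n → q ^ n ≠ 1) (n : ℕ) :
    tEntry q n 0 = 1 := by
  simp [tEntry, qBinom_zero_right hq hroot]

lemma tEntry_succ_succ (hq : q ≠ 0) (hroot : ∀ n : ℕ, 0 < n → q ^ n ≠ 1) {n m : ℕ}
    (hmn : m < n) :
    tEntry q (n + 1) (m + 1) = tEntry q n (m + 1) - q⁻¹ ^ (2 * n) * tEntry q n m := by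
  rw [tEntry, qBinom_succ_succ hq hroot hmn, tEntry, tEntry]
  obtain ⟨t, rfl⟩ : ∃ t, n = m + t := ⟨n - m, by omega⟩
  rw [Nat.add_sub_cancel_left]
  simp only [inv_pow]
  field_simp
  ring

lemma tEntry_succ_self (hq : q ≠ 0) (hroot : ∀ n : ℕ, 0 < n → q ^ n ≠ 1) (n : ℕ) :
    tEntry q (n + 1) (n + 1) = -q⁻¹ ^ (2 * n) * tEntry q n n := by
  simp only [tEntry, qBinom_self hq hroot, inv_pow]
  field_simp
  ring

lemma tRowSum_succ (hq : q ≠ 0) (hroot : ∀ n : ℕ, 0 < n → q ^ n ≠ 1) (n : ℕ) :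
    tRowSum q (n + 1) = (1 - q⁻¹ ^ (2 * n)) * tRowSum q n := by
  have hinner : ∑ m ∈ Finset.range n, tEntry q (n + 1) (m + 1) =
      ∑ m ∈ Finset.range n, tEntry q n (m + 1) -
        q⁻¹ ^ (2 * n) * ∑ m ∈ Finset.range n, tEntry q n m := by
    rw [Finset.mul_sum, ← Finset.sum_sub_distrib]
    exact Finset.sum_congr rfl fun m hm => tEntry_succ_succ hq hroot (Finset.mem_range.mp hm)
  have hfirst : tRowSum q n = ∑ m ∈ Finset.range n, tEntry q n (m + 1) + 1 := by
    rw [tRowSum, Finset.sum_range_succ', tEntry_zero_right hq hroot]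
  have hlast : tRowSum q n = ∑ m ∈ Finset.range n, tEntry q n m + tEntry q n n :=
    Finset.sum_range_succ _ _
  rw [tRowSum, Finset.sum_range_succ, Finset.sum_range_succ', hinner, tEntry_succ_self hq hroot,
    tEntry_zero_right hq hroot]
  linear_combination -hfirst + q⁻¹ ^ (2 * n) * hlast

lemma tRowSum_zero (hq : q ≠ 0) (hroot : ∀ n : ℕ, 0 < n → q ^ n ≠ 1) :
    tRowSum q 0 = 1 := by
  simp [tRowSum, tEntry_zero_right hq hroot]

lemma tRowSum_eq_zero (hq : q ≠ 0) (hroot : ∀ n : ℕ, 0 < n → q ^ n ≠ 1) {n : ℕ}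
    (hn : 0 < n) : tRowSum q n = 0 := by
  induction n, hn using Nat.le_induction with
  | base => rw [tRowSum_succ hq hroot, mul_zero, pow_zero, sub_self, zero_mul]
  | succ n _ ih => rw [tRowSum_succ hq hroot, ih, mul_zero]

lemma tEntry_mul_tEntry_inv (hq : q ≠ 0) (hroot : ∀ n : ℕ, 0 < n → q ^ n ≠ 1)
    {k m n : ℕ} (hmn : m ≤ n) :
    tEntry q (k + n) (k + m) * tEntry q⁻¹ (k + m) k =
      q⁻¹ ^ (k * n) * qBinom q (k + n) k * tEntry q n m := by
  have hbinom :
      qBinom q (k + n) (k + m) * qBinom q (k + m) k = qBinom q (k + n) k * qBinom q n m := by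
    simpa using qBinom_mul hq hroot (n := k + n) (k := k + m) (s := k) (by omega) (by omega)
  have hsign : (-1 : F) ^ (k + m) * (-1) ^ k = (-1) ^ m := by
    rw [pow_add, mul_right_comm, ← pow_add, ← two_mul, pow_mul, neg_one_sq, one_pow, one_mul]
  have hpow :
      q ^ (k + m) * q⁻¹ ^ ((k + m) * (k + n)) * q⁻¹ ^ k * q⁻¹⁻¹ ^ (k * (k + m)) =
        q⁻¹ ^ (k * n) * (q ^ m * q⁻¹ ^ (m * n)) := by
    simp only [inv_inv, inv_pow]
    field_simp
    ring
  calc tEntry q (k + n) (k + m) * tEntry q⁻¹ (k + m) k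
      = ((-1) ^ (k + m) * (-1) ^ k) *
          (q ^ (k + m) * q⁻¹ ^ ((k + m) * (k + n)) * q⁻¹ ^ k * q⁻¹⁻¹ ^ (k * (k + m))) *
          (qBinom q (k + n) (k + m) * qBinom q (k + m) k) := by
        rw [tEntry, tEntry, qBinom_inv]; ring
    _ = q⁻¹ ^ (k * n) * qBinom q (k + n) k * tEntry q n m := by
        rw [hsign, hpow, hbinom, tEntry]; ring

lemma sum_tEntry_mul_tEntry_inv (hq : q ≠ 0) (hroot : ∀ n : ℕ, 0 < n → q ^ n ≠ 1)
    (i k : ℕ) :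
    ∑ j ∈ Finset.Icc k i, tEntry q i j * tEntry q⁻¹ j k = if i = k then 1 else 0 := by
  rcases lt_or_ge i k with hik | hki
  · rw [Finset.Icc_eq_empty_of_lt hik, Finset.sum_empty, if_neg hik.ne]
  obtain ⟨n, rfl⟩ : ∃ n, i = k + n := ⟨i - k, by omega⟩
  calc ∑ j ∈ Finset.Icc k (k + n), tEntry q (k + n) j * tEntry q⁻¹ j k
      = ∑ m ∈ Finset.range (n + 1), tEntry q (k + n) (k + m) * tEntry q⁻¹ (k + m) k := by
        rw [← Finset.Ico_add_one_right_eq_Icc, Finset.sum_Ico_eq_sum_range, add_assoc,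
          Nat.add_sub_cancel_left]
    _ = q⁻¹ ^ (k * n) * qBinom q (k + n) k * tRowSum q n := by
        rw [tRowSum, Finset.mul_sum]
        exact Finset.sum_congr rfl fun m hm =>
          tEntry_mul_tEntry_inv hq hroot (Nat.lt_succ_iff.mp (Finset.mem_range.mp hm))
    _ = if k + n = k then 1 else 0 := by
        rcases Nat.eq_zero_or_pos n with rfl | hn
        · simp [qBinom_self hq hroot, tRowSum_zero hq hroot]
        · rw [tRowSum_eq_zero hq hroot hn, mul_zero, if_neg (by omega)]

lemma Tmat_apply (hq : q ≠ 0) (d : ℕ) (i j : Fin (d + 1)) :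
    Tmat d q i j = if (j : ℕ) ≤ i then tEntry q i j else 0 := by
  have hzpow :
      q ^ ((j : ℕ) * (1 - (i : ℤ))) = q ^ (j : ℕ) * q⁻¹ ^ ((j : ℕ) * (i : ℕ)) := by
    rw [mul_one_sub, zpow_sub₀ hq, div_eq_mul_inv, inv_pow]
    norm_cast
  simp only [Tmat, Matrix.of_apply, tEntry, hzpow, mul_assoc]

lemma Tmat_mul_Tmat_apply {q' : F} (hq : q ≠ 0) (hq' : q' ≠ 0) (d : ℕ) (i k : Fin (d + 1)) :
    (Tmat d q * Tmat d q') i k =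
      ∑ j ∈ Finset.Icc (k : ℕ) i, tEntry q i j * tEntry q' j k := by
  have hIcc : (Finset.range (d + 1)).filter (fun j => j ≤ (i : ℕ) ∧ (k : ℕ) ≤ j) =
      Finset.Icc (k : ℕ) i := by
    ext j
    simp only [Finset.mem_filter, Finset.mem_range, Finset.mem_Icc]
    omega
  rw [Matrix.mul_apply]
  simp only [Tmat_apply hq, Tmat_apply hq', ite_zero_mul_ite_zero]
  rw [Fin.sum_univ_eq_sum_range
      (fun j => if j ≤ (i : ℕ) ∧ (k : ℕ) ≤ j then tEntry q i j * tEntry q' j k else 0),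
    ← Finset.sum_filter, hIcc]

end

theorem stmt_7_general {F : Type*} [Field F] (d : ℕ) (q : F) (hq : q ≠ 0)
    (hroot : ∀ n : ℕ, 0 < n → q ^ n ≠ 1) :
    Tmat d q * Tmat d q⁻¹ = 1 := by
  ext i k
  rw [Tmat_mul_Tmat_apply hq (inv_ne_zero hq), sum_tEntry_mul_tEntry_inv hq hroot]
  simp only [Fin.val_inj, Matrix.one_apply]

theorem stmt_7 {F : Type*} [Field F] (d : ℕ) (hd : 1 ≤ d) (q : F) (hq : q ≠ 0)
    (hroot : ∀ n : ℕ, 0 < n → q ^ n ≠ 1) :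
    Tmat d q * Tmat d q⁻¹ = 1 :=
  stmt_7_general d q hq hroot
end

section
/- Let F be a field, d ≥ 1, q ∈ F nonzero not a root of unity, and t ∈ F nonzero with t ∉ {q^{d-2n+1} : 1 ≤ n ≤ d}. Let D_q(t) ∈ Mat_{d+1}(F) be the diagonal matrix with (i,i)-entry (t q^{d-2i+1}; q²)_i, where (a;q)_n = (1-a)(1-aq)⋯(1-aq^{n-1}). Then D_q(t) is invertible and D_q(t)⁻¹ = Z D_{q⁻¹}(t) Z / (t q^{1-d}; q²)_d. -/
/-- q-Pochhammer symbol `(a;b)_n = ∏_{k<n} (1 - a b^k)`. -/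
def qPoch {F : Type*} [Field F] (a b : F) (n : ℕ) : F :=
  ∏ k ∈ Finset.range n, (1 - a * b ^ k)

/-- The diagonal matrix `D_q(t)` with `(i,i)`-entry `(t q^{d-2i+1}; q²)_i`. -/
def Dmat {F : Type*} [Field F] (d : ℕ) (q t : F) :
    Matrix (Fin (d + 1)) (Fin (d + 1)) F :=
  Matrix.diagonal fun i => qPoch (t * q ^ ((d : ℤ) - 2 * ((i : ℕ) : ℤ) + 1)) (q ^ 2) (i : ℕ)

/-- The matrix `Z` with `(i,j)`-entry `δ_{i+j,d}`. -/
def Zmat (F : Type*) [Field F] (d : ℕ) :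
    Matrix (Fin (d + 1)) (Fin (d + 1)) F :=
  Matrix.of fun i j => if (i : ℕ) + (j : ℕ) = d then 1 else 0

lemma zmat_apply {F : Type*} [Field F] (d : ℕ) (i j : Fin (d+1)) :
    Zmat F d i j = if j = i.rev then 1 else 0 := by
  have hi := i.isLt
  have hj := j.isLt
  have : ((i : ℕ) + (j : ℕ) = d) ↔ j = i.rev := by
    rw [Fin.ext_iff, Fin.val_rev]
    omega
  simp [Zmat, this]

lemma zdz {F : Type*} [Field F] (d : ℕ) (f : Fin (d+1) → F) :
    Zmat F d * Matrix.diagonal f * Zmat F d = Matrix.diagonal (fun i => f i.rev) := by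
  ext i j
  rw [Matrix.mul_apply]
  simp only [Matrix.mul_diagonal, zmat_apply]
  rw [Finset.sum_eq_single i.rev]
  · simp only [if_pos rfl, one_mul]
    by_cases h : j = i
    · subst h; simp [Fin.rev_eq_iff, Matrix.diagonal_apply_eq]
    · have : ¬ (j = i.rev.rev) := by simpa using h
      rw [if_neg this, Matrix.diagonal_apply_ne' _ h, mul_zero]
  · intro b _ hb
    simp [if_neg hb]
  · simp

/-- The factor `1 - t q^{1-d+2k}`. -/
noncomputable def ffac {F : Type*} [Field F] (d : ℕ) (q t : F) (k : ℕ) : F :=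
  1 - t * q ^ ((1 : ℤ) - d + 2 * k)

lemma pochA {F : Type*} [Field F] (d : ℕ) (q t : F) (hq : q ≠ 0) {i : ℕ} (hi : i ≤ d) :
    qPoch (t * q ^ ((d : ℤ) - 2 * i + 1)) (q ^ 2) i
      = ∏ k ∈ Finset.range i, ffac d q t (d - i + k) := by
  unfold qPoch ffac
  refine Finset.prod_congr rfl fun k hk => ?_
  have hk' := Finset.mem_range.mp hk
  rw [mul_assoc, ← pow_mul, ← zpow_natCast q (2 * k), ← zpow_add₀ hq]
  congr 2
  congr 1
  push_cast [Nat.cast_sub hi]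
  omega

lemma pochB {F : Type*} [Field F] (d : ℕ) (q t : F) (hq : q ≠ 0) {j : ℕ} (hj : j ≤ d) :
    qPoch (t * (q⁻¹) ^ ((d : ℤ) - 2 * j + 1)) ((q⁻¹) ^ 2) j
      = ∏ k ∈ Finset.range j, ffac d q t k := by
  rw [← Finset.prod_range_reflect]
  unfold qPoch ffac
  refine Finset.prod_congr rfl fun k hk => ?_
  have hk' := Finset.mem_range.mp hk
  rw [mul_assoc, ← pow_mul, ← zpow_natCast q⁻¹ (2 * k), inv_zpow', inv_zpow', ← zpow_add₀ hq]
  congr 2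
  congr 1
  push_cast [Nat.cast_sub (by omega : k + 1 ≤ j), Nat.cast_sub hk']
  omega

lemma pochC {F : Type*} [Field F] (d : ℕ) (q t : F) (hq : q ≠ 0) :
    qPoch (t * q ^ (1 - (d : ℤ))) (q ^ 2) d = ∏ k ∈ Finset.range d, ffac d q t k := by
  unfold qPoch ffac
  refine Finset.prod_congr rfl fun k hk => ?_
  rw [mul_assoc, ← pow_mul, ← zpow_natCast q (2 * k), ← zpow_add₀ hq]
  congr 2

theorem stmt_9 {F : Type*} [Field F] (d : ℕ) (hd : 1 ≤ d) (q : F) (hq : q ≠ 0)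
    (hroot : ∀ n : ℕ, 0 < n → q ^ n ≠ 1) (t : F) (ht : t ≠ 0)
    (htq : ∀ n : ℕ, 1 ≤ n → n ≤ d → t ≠ q ^ ((d : ℤ) - 2 * (n : ℤ) + 1)) :
    Dmat d q t * ((qPoch (t * q ^ (1 - (d : ℤ))) (q ^ 2) d)⁻¹ •
        (Zmat F d * Dmat d q⁻¹ t * Zmat F d)) = 1 ∧
      ((qPoch (t * q ^ (1 - (d : ℤ))) (q ^ 2) d)⁻¹ •
        (Zmat F d * Dmat d q⁻¹ t * Zmat F d)) * Dmat d q t = 1 := by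
  set c := qPoch (t * q ^ (1 - (d : ℤ))) (q ^ 2) d with hcdef
  have hc : c = ∏ k ∈ Finset.range d, ffac d q t k := pochC d q t hq
  have hne : ∀ k, k < d → ffac d q t k ≠ 0 := by
    intro k hk h0
    have h1 : t * q ^ ((1 : ℤ) - d + 2 * k) = 1 := by
      unfold ffac at h0
      linear_combination -h0
    have h2 : t = q ^ ((d : ℤ) - 2 * ((k + 1 : ℕ) : ℤ) + 1) := by
      rw [eq_inv_of_mul_eq_one_left h1, ← zpow_neg]
      congr 1
      push_cast
      ring
    exact htq (k + 1) (by omega) (by omega) h2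
  have hc0 : c ≠ 0 := by
    rw [hc]
    exact Finset.prod_ne_zero_iff.mpr fun k hk => hne k (Finset.mem_range.mp hk)
  have key : ∀ i : Fin (d + 1),
      qPoch (t * q ^ ((d : ℤ) - 2 * ((i : ℕ) : ℤ) + 1)) (q ^ 2) (i : ℕ) *
        qPoch (t * q⁻¹ ^ ((d : ℤ) - 2 * (((i.rev : Fin (d+1)) : ℕ) : ℤ) + 1)) (q⁻¹ ^ 2)
          ((i.rev : Fin (d+1)) : ℕ) = c := by
    intro i
    have hi : (i : ℕ) ≤ d := by have := i.isLt; omega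
    have hrev : ((i.rev : Fin (d+1)) : ℕ) = d - (i : ℕ) := by
      rw [Fin.val_rev]; omega
    rw [pochA d q t hq hi, hrev, pochB d q t hq (Nat.sub_le d i), mul_comm, hc]
    rw [← Finset.prod_range_add (ffac d q t) (d - (i : ℕ)) (i : ℕ),
      Nat.sub_add_cancel hi]
  unfold Dmat
  rw [zdz, ← Matrix.diagonal_smul, Matrix.diagonal_mul_diagonal,
    Matrix.diagonal_mul_diagonal]
  have fin : ∀ (f : Fin (d+1) → F), (∀ i, f i = 1) → Matrix.diagonal f = 1 := by
    intro f hf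
    have : f = fun _ => 1 := funext hf
    rw [this, Matrix.diagonal_one]
  constructor
  · refine fin _ fun i => ?_
    simp only [Pi.smul_apply, smul_eq_mul]
    rw [mul_comm c⁻¹, ← mul_assoc, key i, mul_inv_cancel₀ hc0]
  · refine fin _ fun i => ?_
    simp only [Pi.smul_apply, smul_eq_mul]
    rw [mul_comm, mul_comm c⁻¹, ← mul_assoc, key i, mul_inv_cancel₀ hc0]
end

section
/- Let F be a field, d ≥ 1, q ∈ F nonzero not a root of unity. The matrix E_q ∈ Mat_{d+1}(F), upper bidiagonal with (i,i)-entry q^{2i-d} and (i-1,i)-entry q^d - q^{2i-2-d}, is invertible, and its inverse is upper triangular with (i,j)-entry (q^{2(d-j+1)}; q²)_{j-i} · q^{d-2j} for 0 ≤ i ≤ j ≤ d and 0 below the diagonal. -/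
/-- The upper bidiagonal matrix `E_q` with `(i,i)`-entry `q^{2i-d}` and
`(i-1,i)`-entry `q^d - q^{2i-2-d}`. -/
def Emat {F : Type*} [Field F] (d : ℕ) (q : F) :
    Matrix (Fin (d + 1)) (Fin (d + 1)) F :=
  Matrix.of fun i j =>
    if (i : ℕ) = (j : ℕ) then q ^ (2 * ((i : ℕ) : ℤ) - (d : ℤ))
    else if (i : ℕ) + 1 = (j : ℕ) then
      q ^ (d : ℤ) - q ^ (2 * ((j : ℕ) : ℤ) - 2 - (d : ℤ))
    else 0

/-- The claimed inverse of `E_q`: upper triangular with `(i,j)`-entry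
`(q^{2(d-j+1)}; q²)_{j-i} · q^{d-2j}` for `i ≤ j`. -/
def EmatInv {F : Type*} [Field F] (d : ℕ) (q : F) :
    Matrix (Fin (d + 1)) (Fin (d + 1)) F :=
  Matrix.of fun i j =>
    if (i : ℕ) ≤ (j : ℕ) then
      qPoch (q ^ (2 * ((d : ℤ) - ((j : ℕ) : ℤ) + 1))) (q ^ 2) ((j : ℕ) - (i : ℕ)) *
        q ^ ((d : ℤ) - 2 * ((j : ℕ) : ℤ))
    else 0

/-!
Row `i` of `E_q` is supported on columns `i` and `i + 1`, so each entry `(i, j)` of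
`E_q · E_q⁻¹` has just two terms. On the diagonal they give `q^{2i-d} · q^{d-2i} = 1`. For
`i < j` the Pochhammer symbol of length `j - i` is the one of length `j - i - 1` times
`1 - q^{2(d-i)}`, which turns `q^{2i-d}` into `q^{2i-d} - q^d` and cancels the superdiagonal term.
A one-sided inverse of a square matrix is two-sided.
-/

open Finset

lemma qPoch_zero {F : Type*} [Field F] (a b : F) : qPoch a b 0 = 1 :=
  prod_range_zero _

lemma qPoch_succ {F : Type*} [Field F] (a b : F) (n : ℕ) :
    qPoch a b (n + 1) = qPoch a b n * (1 - a * b ^ n) :=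
  prod_range_succ _ n

lemma sum_range_mul_of_bidiagonal {R : Type*} [NonUnitalNonAssocSemiring R]
    (f g : ℕ → ℕ → R) {n i j : ℕ} (hf : ∀ k, k ≠ i → k ≠ i + 1 → f i k = 0)
    (hg : ∀ k, j < k → g k j = 0) (hj : j < n) :
    ∑ k ∈ range n, f i k * g k j = f i i * g i j + f i (i + 1) * g (i + 1) j := by
  have hpair : ∑ k ∈ {i, i + 1}, f i k * g k j = ∑ k ∈ range n ∪ {i, i + 1}, f i k * g k j :=
    sum_subset subset_union_right fun k _ hk => by
      simp only [mem_insert, mem_singleton, not_or] at hk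
      rw [hf k hk.1 hk.2, zero_mul]
  have hrange : ∑ k ∈ range n, f i k * g k j = ∑ k ∈ range n ∪ {i, i + 1}, f i k * g k j :=
    sum_subset subset_union_left fun k _ hk => by
      rw [hg k (by simp only [mem_range, not_lt] at hk; omega), mul_zero]
  rw [hrange, ← hpair, sum_pair (Nat.ne_of_lt i.lt_succ_self)]

section

variable {F : Type*} [Field F] (d : ℕ) (q : F)

def ematEntry (i k : ℕ) : F :=
  if i = k then q ^ (2 * (i : ℤ) - d)
  else if i + 1 = k then q ^ (d : ℤ) - q ^ (2 * (k : ℤ) - 2 - d)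
  else 0

def ematInvEntry (k j : ℕ) : F :=
  if k ≤ j then qPoch (q ^ (2 * ((d : ℤ) - j + 1))) (q ^ 2) (j - k) * q ^ ((d : ℤ) - 2 * j)
  else 0

lemma Emat_apply (i k : Fin (d + 1)) : Emat d q i k = ematEntry d q i k := rfl

lemma EmatInv_apply (k j : Fin (d + 1)) : EmatInv d q k j = ematInvEntry d q k j := rfl

lemma ematEntry_of_ne {i k : ℕ} (h₀ : k ≠ i) (h₁ : k ≠ i + 1) : ematEntry d q i k = 0 := by
  rw [ematEntry, if_neg (Ne.symm h₀), if_neg (Ne.symm h₁)]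

lemma ematInvEntry_of_lt {k j : ℕ} (h : j < k) : ematInvEntry d q k j = 0 :=
  if_neg (Nat.not_le_of_lt h)

variable {q}

lemma ematEntry_diag_mul_ematInvEntry_diag (hq : q ≠ 0) (i : ℕ) :
    ematEntry d q i i * ematInvEntry d q i i = 1 := by
  rw [ematEntry, ematInvEntry, if_pos rfl, if_pos le_rfl, Nat.sub_self, qPoch_zero, one_mul,
    ← zpow_add₀ hq, sub_add_sub_cancel', sub_self, zpow_zero]

lemma ematEntry_mul_ematInvEntry_add_of_lt (hq : q ≠ 0) {i j : ℕ} (hij : i < j) :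
    ematEntry d q i i * ematInvEntry d q i j
      + ematEntry d q i (i + 1) * ematInvEntry d q (i + 1) j = 0 := by
  obtain ⟨n, rfl⟩ := Nat.exists_eq_add_of_lt hij
  have hlen : i + n + 1 - i = n + 1 := by omega
  have hlen' : i + n + 1 - (i + 1) = n := by omega
  have hlast :
      q ^ (2 * ((d : ℤ) - ↑(i + n + 1) + 1)) * (q ^ 2) ^ n = q ^ (2 * (d : ℤ) - 2 * i) := by
    rw [← pow_mul, ← zpow_natCast, ← zpow_add₀ hq]; push_cast; ring_nf
  have hpow : q ^ (2 * (i : ℤ) - d) * q ^ (2 * (d : ℤ) - 2 * i) = q ^ (d : ℤ) := by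
    rw [← zpow_add₀ hq]; ring_nf
  have hsub : q ^ (2 * ((i + 1 : ℕ) : ℤ) - 2 - d) = q ^ (2 * (i : ℤ) - d) := by
    push_cast; ring_nf
  simp only [ematEntry, ematInvEntry, ↓reduceIte, if_neg (Nat.succ_ne_self i).symm,
    if_pos (by omega : i ≤ i + n + 1), if_pos (by omega : i + 1 ≤ i + n + 1),
    hlen, hlen', qPoch_succ, hlast, hsub]
  linear_combination (-(qPoch (q ^ (2 * ((d : ℤ) - ↑(i + n + 1) + 1))) (q ^ 2) n *
    q ^ ((d : ℤ) - 2 * ↑(i + n + 1)))) * hpow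

lemma ematEntry_mul_ematInvEntry_add (hq : q ≠ 0) (i j : ℕ) :
    ematEntry d q i i * ematInvEntry d q i j
      + ematEntry d q i (i + 1) * ematInvEntry d q (i + 1) j = if i = j then 1 else 0 := by
  rcases lt_trichotomy i j with hij | rfl | hji
  · rw [ematEntry_mul_ematInvEntry_add_of_lt d hq hij, if_neg hij.ne]
  · rw [ematEntry_diag_mul_ematInvEntry_diag d hq, ematInvEntry_of_lt d q i.lt_succ_self,
      mul_zero, add_zero, if_pos rfl]
  · rw [ematInvEntry_of_lt d q hji, ematInvEntry_of_lt d q (hji.trans i.lt_succ_self),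
      mul_zero, mul_zero, add_zero, if_neg hji.ne']

end

theorem stmt_11_general {F : Type*} [Field F] (d : ℕ) (q : F) (hq : q ≠ 0) :
    Emat d q * EmatInv d q = 1 ∧ EmatInv d q * Emat d q = 1 := by
  have h : Emat d q * EmatInv d q = 1 := by
    ext i j
    simp only [Matrix.mul_apply, Matrix.one_apply, Emat_apply, EmatInv_apply]
    rw [Fin.sum_univ_eq_sum_range (fun k => ematEntry d q i k * ematInvEntry d q k j),
      sum_range_mul_of_bidiagonal _ _ (fun k => ematEntry_of_ne d q)
        (fun k => ematInvEntry_of_lt d q) j.isLt,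
      ematEntry_mul_ematInvEntry_add d hq]
    simp only [Fin.val_inj]
  exact ⟨h, mul_eq_one_comm.mp h⟩

theorem stmt_11 {F : Type*} [Field F] (d : ℕ) (hd : 1 ≤ d) (q : F) (hq : q ≠ 0)
    (hroot : ∀ n : ℕ, 0 < n → q ^ n ≠ 1) :
    Emat d q * EmatInv d q = 1 ∧ EmatInv d q * Emat d q = 1 :=
  stmt_11_general d q hq
end

section
/- Let F be a field, d ≥ 1, q nonzero not a root of unity, t nonzero with t ∉ {q^{d-2n+1} : 1 ≤ n ≤ d}. With E_q the upper bidiagonal matrix above and D_q(t) the diagonal matrix with (i,i)-entry (t q^{d-2i+1}; q²)_i, define G_q(t) to be the upper bidiagonal matrix with (i,i)-entry q^{2i-d} and (i-1,i)-entry (q^d - q^{2i-2-d})(1 - t q^{d-2i+1}). Then G_q(t) = D_q(t)⁻¹ · E_q · D_q(t). -/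
/-- The upper bidiagonal matrix `G_q(t)` with `(i,i)`-entry `q^{2i-d}` and
`(i-1,i)`-entry `(q^d - q^{2i-2-d})(1 - t q^{d-2i+1})`. -/
def Gmat {F : Type*} [Field F] (d : ℕ) (q t : F) :
    Matrix (Fin (d + 1)) (Fin (d + 1)) F :=
  Matrix.of fun i j =>
    if (i : ℕ) = (j : ℕ) then q ^ (2 * ((i : ℕ) : ℤ) - (d : ℤ))
    else if (i : ℕ) + 1 = (j : ℕ) then
      (q ^ (d : ℤ) - q ^ (2 * ((j : ℕ) : ℤ) - 2 - (d : ℤ))) *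
        (1 - t * q ^ ((d : ℤ) - 2 * ((j : ℕ) : ℤ) + 1))
    else 0

lemma qPoch_factor_ne {F : Type*} [Field F] (d : ℕ) (q t : F) (hq : q ≠ 0)
    (htq : ∀ n : ℕ, 1 ≤ n → n ≤ d → t ≠ q ^ ((d : ℤ) - 2 * (n : ℤ) + 1))
    (i k : ℕ) (hik : k < i) (hid : i ≤ d) :
    (1 : F) - t * q ^ ((d : ℤ) - 2 * (i : ℤ) + 1) * (q ^ 2) ^ k ≠ 0 := by
  have hexp : (d : ℤ) - 2 * (i : ℤ) + 1 + ((2 * k : ℕ) : ℤ)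
      = (d : ℤ) - 2 * (i : ℤ) + 1 + 2 * (k : ℤ) := by push_cast; ring
  have hcomb : t * q ^ ((d : ℤ) - 2 * (i : ℤ) + 1) * (q ^ 2) ^ k
      = t * q ^ ((d : ℤ) - 2 * (i : ℤ) + 1 + 2 * (k : ℤ)) := by
    rw [mul_assoc, ← pow_mul, ← zpow_natCast q (2 * k), ← zpow_add₀ hq, hexp]
  intro h
  have h1 : t * q ^ ((d : ℤ) - 2 * (i : ℤ) + 1 + 2 * (k : ℤ)) = 1 := by
    rw [← hcomb]; linear_combination -h
  set e : ℤ := (d : ℤ) - 2 * (i : ℤ) + 1 + 2 * (k : ℤ) with he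
  have ht' : t = q ^ (-e) := by
    rw [zpow_neg]
    exact eq_inv_of_mul_eq_one_left h1
  set n : ℕ := d + k + 1 - i with hn
  have hn1 : 1 ≤ n := by omega
  have hn2 : n ≤ d := by omega
  have hne : -e = (d : ℤ) - 2 * (n : ℤ) + 1 := by
    have hni : (n : ℤ) = (d : ℤ) + (k : ℤ) + 1 - (i : ℤ) := by
      rw [hn]; push_cast [show i ≤ d + k + 1 by omega]; ring
    rw [hni, he]; ring
  exact htq n hn1 hn2 (by rw [ht', hne])

lemma qPoch_entry_ne_zero {F : Type*} [Field F] (d : ℕ) (q t : F) (hq : q ≠ 0)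
    (htq : ∀ n : ℕ, 1 ≤ n → n ≤ d → t ≠ q ^ ((d : ℤ) - 2 * (n : ℤ) + 1))
    (i : ℕ) (hid : i ≤ d) :
    qPoch (t * q ^ ((d : ℤ) - 2 * (i : ℤ) + 1)) (q ^ 2) i ≠ 0 := by
  unfold qPoch
  rw [Finset.prod_ne_zero_iff]
  intro k hk
  exact qPoch_factor_ne d q t hq htq i k (Finset.mem_range.mp hk) hid

lemma qPoch_succ_rec {F : Type*} [Field F] (d : ℕ) (q t : F) (hq : q ≠ 0) (i : ℕ) :
    qPoch (t * q ^ ((d : ℤ) - 2 * ((i : ℤ) + 1) + 1)) (q ^ 2) (i + 1)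
      = qPoch (t * q ^ ((d : ℤ) - 2 * (i : ℤ) + 1)) (q ^ 2) i *
        (1 - t * q ^ ((d : ℤ) - 2 * ((i : ℤ) + 1) + 1)) := by
  unfold qPoch
  rw [Finset.prod_range_succ']
  congr 1
  · apply Finset.prod_congr rfl
    intro k _
    have key : t * q ^ ((d : ℤ) - 2 * ((i : ℤ) + 1) + 1) * (q ^ 2) ^ (k + 1)
        = t * q ^ ((d : ℤ) - 2 * (i : ℤ) + 1) * (q ^ 2) ^ k := by
      have e1 : (d : ℤ) - 2 * ((i : ℤ) + 1) + 1 + ((2 * (k + 1) : ℕ) : ℤ)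
          = (d : ℤ) - 2 * (i : ℤ) + 1 + ((2 * k : ℕ) : ℤ) := by push_cast; ring
      rw [mul_assoc, mul_assoc, ← pow_mul, ← pow_mul,
        ← zpow_natCast q (2 * (k + 1)), ← zpow_natCast q (2 * k),
        ← zpow_add₀ hq, ← zpow_add₀ hq, e1]
    rw [key]
  · simp


theorem stmt_12 {F : Type*} [Field F] (d : ℕ) (hd : 1 ≤ d) (q : F) (hq : q ≠ 0)
    (hroot : ∀ n : ℕ, 0 < n → q ^ n ≠ 1) (t : F) (ht : t ≠ 0)
    (htq : ∀ n : ℕ, 1 ≤ n → n ≤ d → t ≠ q ^ ((d : ℤ) - 2 * (n : ℤ) + 1)) :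
    Gmat d q t = (Dmat d q t)⁻¹ * Emat d q * Dmat d q t := by
  set v : Fin (d + 1) → F :=
    fun i => qPoch (t * q ^ ((d : ℤ) - 2 * ((i : ℕ) : ℤ) + 1)) (q ^ 2) (i : ℕ) with hv
  have hvne : ∀ i : Fin (d + 1), v i ≠ 0 := fun i =>
    qPoch_entry_ne_zero d q t hq htq (i : ℕ) (Nat.lt_succ_iff.mp i.isLt)
  have hDinv : (Dmat d q t)⁻¹ = Matrix.diagonal (fun i => (v i)⁻¹) := by
    apply Matrix.inv_eq_left_inv
    rw [show Dmat d q t = Matrix.diagonal v from rfl, Matrix.diagonal_mul_diagonal,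
      ← Matrix.diagonal_one]
    have he : (fun i => (v i)⁻¹ * v i) = fun _ : Fin (d + 1) => (1 : F) :=
      funext fun i => inv_mul_cancel₀ (hvne i)
    rw [he]
  rw [hDinv]
  ext i j
  rw [show Dmat d q t = Matrix.diagonal v from rfl, Matrix.mul_diagonal, Matrix.diagonal_mul]
  simp only [Gmat, Emat, Matrix.of_apply]
  by_cases h1 : (i : ℕ) = (j : ℕ)
  · have hij : i = j := Fin.ext h1
    subst hij
    rw [if_pos rfl, if_pos rfl]
    field_simp [hvne i]
  · by_cases h2 : (i : ℕ) + 1 = (j : ℕ)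
    · rw [if_neg h1, if_neg h1, if_pos h2, if_pos h2]
      have hvj : v j = v i * (1 - t * q ^ ((d : ℤ) - 2 * ((j : ℕ) : ℤ) + 1)) := by
        rw [hv]
        simp only
        rw [← h2]
        push_cast
        exact qPoch_succ_rec d q t hq (i : ℕ)
      rw [hvj]
      field_simp [hvne i]
    · rw [if_neg h1, if_neg h2, if_neg h1, if_neg h2]
      simp
end

section
/- Let F be a field, d ≥ 1, q nonzero not a root of unity, t nonzero with t ∉ {q^{d-2n+1} : 1 ≤ n ≤ d}. Define L_q(t) to be the upper bidiagonal matrix with (i,i)-entry q^{2i-d} and (i-1,i)-entry (q^d - q^{2i-2-d})/(1 - t q^{d-2i+1}). Then L_q(t) = D_q(t) · E_q · D_q(t)⁻¹, where E_q and D_q(t) are as above. -/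
/-- The upper bidiagonal matrix `L_q(t)` with `(i,i)`-entry `q^{2i-d}` and
`(i-1,i)`-entry `(q^d - q^{2i-2-d})/(1 - t q^{d-2i+1})`. -/
def Lmat {F : Type*} [Field F] (d : ℕ) (q t : F) :
    Matrix (Fin (d + 1)) (Fin (d + 1)) F :=
  Matrix.of fun i j =>
    if (i : ℕ) = (j : ℕ) then q ^ (2 * ((i : ℕ) : ℤ) - (d : ℤ))
    else if (i : ℕ) + 1 = (j : ℕ) then
      (q ^ (d : ℤ) - q ^ (2 * ((j : ℕ) : ℤ) - 2 - (d : ℤ))) *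
        (1 - t * q ^ ((d : ℤ) - 2 * ((j : ℕ) : ℤ) + 1))⁻¹
    else 0

theorem stmt_13 {F : Type*} [Field F] (d : ℕ) (hd : 1 ≤ d) (q : F) (hq : q ≠ 0)
    (hroot : ∀ n : ℕ, 0 < n → q ^ n ≠ 1) (t : F) (ht : t ≠ 0)
    (htq : ∀ n : ℕ, 1 ≤ n → n ≤ d → t ≠ q ^ ((d : ℤ) - 2 * (n : ℤ) + 1)) :
    Lmat d q t = Dmat d q t * Emat d q * (Dmat d q t)⁻¹ := by
  classical
  set a : ℕ → F := fun n => qPoch (t * q ^ ((d : ℤ) - 2 * (n : ℤ) + 1)) (q ^ 2) n with ha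
  have key : ∀ n : ℕ, 1 ≤ n → n ≤ d → (1 : F) - t * q ^ ((d:ℤ) - 2*(n:ℤ) + 1) ≠ 0 := by
    intro n h1 h2 h0
    have h0' : t * q ^ ((d:ℤ) - 2*(n:ℤ) + 1) = 1 := (sub_eq_zero.mp h0).symm
    have ht' : t = (q ^ ((d:ℤ) - 2*(n:ℤ) + 1))⁻¹ := eq_inv_of_mul_eq_one_left h0'
    refine htq (d+1-n) (by omega) (by omega) ?_
    rw [ht', ← zpow_neg]
    congr 1
    have : ((d+1-n : ℕ) : ℤ) = (d:ℤ) + 1 - n := by omega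
    rw [this]; ring
  have hne : ∀ n : ℕ, n ≤ d → a n ≠ 0 := by
    intro n hn
    simp only [ha, qPoch]
    refine Finset.prod_ne_zero_iff.mpr ?_
    intro k hk
    rw [Finset.mem_range] at hk
    have he : t * q ^ ((d:ℤ) - 2*(n:ℤ) + 1) * (q ^ 2) ^ k
        = t * q ^ ((d:ℤ) - 2*(((n - k : ℕ)):ℤ) + 1) := by
      rw [mul_assoc]
      congr 1
      rw [← pow_mul, ← zpow_natCast q (2*k), ← zpow_add₀ hq]
      congr 1
      have : ((n - k : ℕ) : ℤ) = (n:ℤ) - k := by omega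
      rw [this]; push_cast; ring
    rw [he]
    exact key (n - k) (by omega) (by omega)
  have hrec : ∀ n : ℕ,
      a (n+1) = (1 - t * q ^ ((d:ℤ) - 2*((n:ℤ)+1) + 1)) * a n := by
    intro n
    simp only [ha, qPoch, Finset.prod_range_succ']
    rw [mul_comm]
    congr 1
    · push_cast; ring
    · apply Finset.prod_congr rfl
      intro k hk
      congr 1
      rw [mul_assoc, mul_assoc]
      congr 1
      rw [← pow_mul, ← pow_mul, ← zpow_natCast q (2*(k+1)), ← zpow_natCast q (2*k),
        ← zpow_add₀ hq, ← zpow_add₀ hq]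
      congr 1
      push_cast; ring
  have hD : Dmat d q t = Matrix.diagonal fun i : Fin (d+1) => a (i:ℕ) := rfl
  have hDinv : (Dmat d q t)⁻¹ = Matrix.diagonal fun i : Fin (d+1) => (a (i:ℕ))⁻¹ := by
    apply Matrix.inv_eq_right_inv
    rw [hD, Matrix.diagonal_mul_diagonal]
    ext i j
    rcases eq_or_ne i j with rfl | hij
    · simp [mul_inv_cancel₀ (hne _ i.is_le)]
    · simp [Matrix.diagonal_apply_ne _ hij, Matrix.one_apply_ne hij]
  rw [hDinv, hD]
  ext i j
  rw [Matrix.mul_diagonal, Matrix.diagonal_mul]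
  by_cases h1 : (i:ℕ) = (j:ℕ)
  · have hij : i = j := Fin.ext h1
    subst hij
    simp only [Lmat, Emat, Matrix.of_apply, if_pos rfl]
    rw [mul_comm (a (i:ℕ)), mul_assoc, mul_inv_cancel₀ (hne _ i.is_le), mul_one]
    simp
  · by_cases h2 : (i:ℕ) + 1 = (j:ℕ)
    · simp only [Lmat, Emat, Matrix.of_apply, if_neg h1, if_pos h2]
      have hrecj : a (j:ℕ) = (1 - t * q ^ ((d:ℤ) - 2*((j:ℕ):ℤ) + 1)) * a (i:ℕ) := by
        rw [← h2, hrec]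
        push_cast
        try ring
      have hai : a (i:ℕ) ≠ 0 := hne _ i.is_le
      have hc : (1:F) - t * q ^ ((d:ℤ) - 2*((j:ℕ):ℤ) + 1) ≠ 0 :=
        key (j:ℕ) (by omega) j.is_le
      rw [hrecj, mul_inv_rev]
      field_simp
      try ring
    · simp [Lmat, Emat, Matrix.of_apply, if_neg h1, if_neg h2]
end

section
/- Let F be a field, d ≥ 1, q nonzero not a root of unity. Define E_q, K_q, Z as above. Then the triple u = E_q, v = K_q, w = Z E_{q⁻¹} Z satisfies the three q-Weyl relations: (q u v - q⁻¹ v u)/(q - q⁻¹) = I, (q v w - q⁻¹ w v)/(q - q⁻¹) = I, and (q w u - q⁻¹ u w)/(q - q⁻¹) = I. -/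
/-- The diagonal matrix `K_q` with `(i,i)`-entry `q^(d-2i)`. -/
def Kmat {F : Type*} [Field F] (d : ℕ) (q : F) :
    Matrix (Fin (d + 1)) (Fin (d + 1)) F :=
  Matrix.diagonal fun i => q ^ ((d : ℤ) - 2 * ((i : ℕ) : ℤ))

namespace Stmt15

variable {F : Type*} [Field F]

lemma ssum_eq {n : ℕ} (j : Fin n) (f : Fin n → F) :
    ∑ k : Fin n, (if (j : ℕ) = (k : ℕ) then f k else 0) = f j := by
  rw [Finset.sum_eq_single j]
  · rw [if_pos rfl]
  · intro b _ hb
    exact if_neg fun hc => hb (Fin.ext hc.symm)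
  · intro h; exact absurd (Finset.mem_univ _) h

lemma ssum_eq' {n : ℕ} (j : Fin n) (f : Fin n → F) :
    ∑ k : Fin n, (if (k : ℕ) = (j : ℕ) then f k else 0) = f j := by
  rw [Finset.sum_eq_single j]
  · rw [if_pos rfl]
  · intro b _ hb
    exact if_neg fun hc => hb (Fin.ext hc)
  · intro h; exact absurd (Finset.mem_univ _) h

lemma ssum_pred {d : ℕ} (i : Fin (d + 1)) (f : Fin (d + 1) → F) :
    ∑ k : Fin (d + 1), (if (k : ℕ) + 1 = (i : ℕ) then f k else 0) =
      if h : 1 ≤ (i : ℕ) then f ⟨(i : ℕ) - 1, lt_of_le_of_lt (Nat.sub_le _ _) i.isLt⟩ else 0 := by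
  split_ifs with h
  · rw [Finset.sum_eq_single (⟨(i : ℕ) - 1, lt_of_le_of_lt (Nat.sub_le _ _) i.isLt⟩ : Fin (d+1))]
    · exact if_pos (show (i:ℕ) - 1 + 1 = (i:ℕ) by omega)
    · intro b _ hb
      refine if_neg fun hc => hb (Fin.ext ?_)
      show (b : ℕ) = (i : ℕ) - 1
      omega
    · intro h; exact absurd (Finset.mem_univ _) h
  · apply Finset.sum_eq_zero
    intro k _
    exact if_neg (by omega)

lemma ssum_succ {d : ℕ} (i : Fin (d + 1)) (f : Fin (d + 1) → F) :
    ∑ k : Fin (d + 1), (if (i : ℕ) + 1 = (k : ℕ) then f k else 0) =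
      if h : (i : ℕ) < d then f ⟨(i : ℕ) + 1, by omega⟩ else 0 := by
  split_ifs with h
  · rw [Finset.sum_eq_single (⟨(i : ℕ) + 1, by omega⟩ : Fin (d+1))]
    · exact if_pos rfl
    · intro b _ hb
      refine if_neg fun hc => hb (Fin.ext ?_)
      show (b : ℕ) = (i : ℕ) + 1
      omega
    · intro h; exact absurd (Finset.mem_univ _) h
  · apply Finset.sum_eq_zero
    intro k _
    have := k.isLt
    exact if_neg (by omega)


lemma Emat_eq (d : ℕ) (q : F) (i j : Fin (d + 1)) :
    Emat d q i j =
      (if (i : ℕ) = (j : ℕ) then q ^ (2 * ((i : ℕ) : ℤ) - (d : ℤ)) else 0) +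
      (if (i : ℕ) + 1 = (j : ℕ) then q ^ (d : ℤ) - q ^ (2 * ((i : ℕ) : ℤ) - (d : ℤ)) else 0) := by
  show (if (i : ℕ) = (j : ℕ) then q ^ (2 * ((i : ℕ) : ℤ) - (d : ℤ))
    else if (i : ℕ) + 1 = (j : ℕ) then q ^ (d : ℤ) - q ^ (2 * ((j : ℕ) : ℤ) - 2 - (d : ℤ))
    else 0) = _
  rcases eq_or_ne (i : ℕ) (j : ℕ) with h1 | h1
  · rw [if_pos h1, if_pos h1, if_neg (by omega), add_zero]
  · rw [if_neg h1, if_neg h1, zero_add]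
    rcases eq_or_ne ((i : ℕ) + 1) (j : ℕ) with h2 | h2
    · rw [if_pos h2, if_pos h2]
      congr 2
      omega
    · rw [if_neg h2, if_neg h2]

/-- index reversal -/
def rv {d : ℕ} (i : Fin (d + 1)) : Fin (d + 1) := ⟨d - (i : ℕ), by omega⟩

lemma Zmat_mul_apply (d : ℕ) (M : Matrix (Fin (d + 1)) (Fin (d + 1)) F) (i j : Fin (d + 1)) :
    (Zmat F d * M) i j = M (rv i) j := by
  rw [Matrix.mul_apply, Finset.sum_eq_single (rv i)]
  · have hi := i.isLt
    rw [show Zmat F d i (rv i) = if (i : ℕ) + (d - (i : ℕ)) = d then (1:F) else 0 from rfl,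
      if_pos (by omega), one_mul]
  · intro b _ hb
    rw [show Zmat F d i b = if (i : ℕ) + (b : ℕ) = d then (1:F) else 0 from rfl,
      if_neg fun hc => hb (Fin.ext (show (b : ℕ) = d - (i : ℕ) by omega)), zero_mul]
  · intro h; exact absurd (Finset.mem_univ _) h

lemma mul_Zmat_apply (d : ℕ) (M : Matrix (Fin (d + 1)) (Fin (d + 1)) F) (i j : Fin (d + 1)) :
    (M * Zmat F d) i j = M i (rv j) := by
  rw [Matrix.mul_apply, Finset.sum_eq_single (rv j)]
  · have hj := j.isLt
    rw [show Zmat F d (rv j) j = if d - (j : ℕ) + (j : ℕ) = d then (1:F) else 0 from rfl,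
      if_pos (by omega), mul_one]
  · intro b _ hb
    rw [show Zmat F d b j = if (b : ℕ) + (j : ℕ) = d then (1:F) else 0 from rfl,
      if_neg fun hc => hb (Fin.ext (show (b : ℕ) = d - (j : ℕ) by omega)), mul_zero]
  · intro h; exact absurd (Finset.mem_univ _) h

lemma W_eq (d : ℕ) (q : F) (hq : q ≠ 0) (i j : Fin (d + 1)) :
    (Zmat F d * Emat d q⁻¹ * Zmat F d) i j =
      (if (i : ℕ) = (j : ℕ) then q ^ (2 * ((i : ℕ) : ℤ) - (d : ℤ)) else 0) +
      (if (j : ℕ) + 1 = (i : ℕ) then q ^ (-(d : ℤ)) - q ^ (2 * ((i : ℕ) : ℤ) - (d : ℤ)) else 0) := by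
  rw [mul_Zmat_apply, Zmat_mul_apply, Emat_eq]
  have hi := i.isLt
  have hj := j.isLt
  have hrvi : ((rv i : Fin (d + 1)) : ℕ) = d - (i : ℕ) := rfl
  have hrvj : ((rv j : Fin (d + 1)) : ℕ) = d - (j : ℕ) := rfl
  have hinv : ∀ e : ℤ, (q⁻¹) ^ e = q ^ (-e) := fun e => by rw [inv_zpow, ← zpow_neg]
  rw [hrvi, hrvj]
  rcases eq_or_ne (i : ℕ) (j : ℕ) with h1 | h1
  · rw [if_pos (show d - (i:ℕ) = d - (j:ℕ) by omega), if_pos h1,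
      if_neg (by omega), if_neg (by omega), add_zero, add_zero, hinv]
    congr 1
    omega
  · rw [if_neg (by omega), if_neg h1, zero_add, zero_add]
    rcases eq_or_ne ((j : ℕ) + 1) (i : ℕ) with h2 | h2
    · rw [if_pos (by omega), if_pos h2, hinv, hinv]
      congr 2
      omega
    · rw [if_neg (by omega), if_neg h2]


lemma key_diag (q : F) (hq : q ≠ 0) (a b a' b' : ℤ) (h1 : a + b = 0) (h2 : a' + b' = 0) :
    q * (q ^ a * q ^ b) - q⁻¹ * (q ^ a' * q ^ b') = q - q⁻¹ := by
  rw [← zpow_add₀ hq, ← zpow_add₀ hq, h1, h2, zpow_zero, mul_one, mul_one]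

lemma key_cross (q : F) (hq : q ≠ 0) (w : F) (b c : ℤ) (h : c = b + 2) :
    q * (w * q ^ b) - q⁻¹ * (q ^ c * w) = 0 := by
  subst h
  have e1 : q * q ^ b = q ^ (b + 1) := by rw [mul_comm, ← zpow_add_one₀ hq]
  have e2 : q⁻¹ * q ^ (b + 2) = q ^ (b + 1) := by
    rw [mul_comm, ← zpow_sub_one₀ hq]; congr 1; ring
  linear_combination w * (e1.trans e2.symm)

lemma key_cross' (q : F) (hq : q ≠ 0) (w : F) (b c : ℤ) (h : c = b + 2) :
    q * (q ^ b * w) - q⁻¹ * (w * q ^ c) = 0 := by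
  subst h
  have e1 : q * q ^ b = q ^ (b + 1) := by rw [mul_comm, ← zpow_add_one₀ hq]
  have e2 : q⁻¹ * q ^ (b + 2) = q ^ (b + 1) := by
    rw [mul_comm, ← zpow_sub_one₀ hq]; congr 1; ring
  linear_combination w * (e1.trans e2.symm)

lemma key3_mid (q : F) (hq : q ≠ 0) (d : ℕ) (a b c : ℤ) (hb : a = b + 2) (hc : c = a + 2) :
    q * (q ^ a * q ^ a + (q ^ (-(d:ℤ)) - q ^ a) * (q ^ (d:ℤ) - q ^ b)) -
      q⁻¹ * (q ^ a * q ^ a + (q ^ (d:ℤ) - q ^ a) * (q ^ (-(d:ℤ)) - q ^ c)) = q - q⁻¹ := by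
  subst hc
  have hb' : b = a + (-2) := by omega
  subst hb'
  have h2 : q ^ (2:ℤ) = q * q := by
    rw [show (2:ℤ) = 1 + 1 from rfl, zpow_add₀ hq, zpow_one]
  rw [zpow_add₀ hq, zpow_add₀ hq, show ((-2):ℤ) = -(2:ℤ) from rfl, zpow_neg, zpow_neg, h2]
  have hD : q ^ (d:ℤ) ≠ 0 := zpow_ne_zero _ hq
  have hT : q ^ a ≠ 0 := zpow_ne_zero _ hq
  field_simp
  ring

lemma key3_left (q : F) (hq : q ≠ 0) (d : ℕ) (a c : ℤ) (ha : a = -(d:ℤ)) (hc : c = a + 2) :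
    q * (q ^ a * q ^ a) -
      q⁻¹ * (q ^ a * q ^ a + (q ^ (d:ℤ) - q ^ a) * (q ^ (-(d:ℤ)) - q ^ c)) = q - q⁻¹ := by
  subst hc; subst ha
  have h2 : q ^ (2:ℤ) = q * q := by
    rw [show (2:ℤ) = 1 + 1 from rfl, zpow_add₀ hq, zpow_one]
  rw [zpow_add₀ hq, zpow_neg, h2, zpow_natCast]
  have hD : q ^ (d:ℕ) ≠ 0 := pow_ne_zero _ hq
  field_simp
  ring

lemma key3_right (q : F) (hq : q ≠ 0) (d : ℕ) (a b : ℤ) (ha : a = (d:ℤ)) (hb : b = a - 2) :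
    q * (q ^ a * q ^ a + (q ^ (-(d:ℤ)) - q ^ a) * (q ^ (d:ℤ) - q ^ b)) -
      q⁻¹ * (q ^ a * q ^ a) = q - q⁻¹ := by
  have hb' : b = a + (-2) := by omega
  subst hb'; subst ha
  have h2 : q ^ (2:ℤ) = q * q := by
    rw [show (2:ℤ) = 1 + 1 from rfl, zpow_add₀ hq, zpow_one]
  rw [zpow_add₀ hq, show ((-2):ℤ) = -(2:ℤ) from rfl, zpow_neg, zpow_neg, h2, zpow_natCast]
  have hD : q ^ (d:ℕ) ≠ 0 := pow_ne_zero _ hq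
  field_simp
  ring
lemma WE_apply (d : ℕ) (q : F) (hq : q ≠ 0) (i j : Fin (d + 1)) :
    ((Zmat F d * Emat d q⁻¹ * Zmat F d) * Emat d q) i j =
      (if (i : ℕ) = (j : ℕ) then
        q ^ (2*((i:ℕ):ℤ)-(d:ℤ)) * q ^ (2*((i:ℕ):ℤ)-(d:ℤ)) else 0) +
      (if (i : ℕ) + 1 = (j : ℕ) then
        q ^ (2*((i:ℕ):ℤ)-(d:ℤ)) * (q ^ (d:ℤ) - q ^ (2*((i:ℕ):ℤ)-(d:ℤ))) else 0) +
      (if 1 ≤ (i : ℕ) ∧ (i : ℕ) - 1 = (j : ℕ) then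
        (q ^ (-(d:ℤ)) - q ^ (2*((i:ℕ):ℤ)-(d:ℤ))) * q ^ (2*(((i:ℕ):ℤ)-1)-(d:ℤ)) else 0) +
      (if 1 ≤ (i : ℕ) ∧ (i : ℕ) = (j : ℕ) then
        (q ^ (-(d:ℤ)) - q ^ (2*((i:ℕ):ℤ)-(d:ℤ))) *
          (q ^ (d:ℤ) - q ^ (2*(((i:ℕ):ℤ)-1)-(d:ℤ))) else 0) := by
  rw [Matrix.mul_apply]
  have step : ∀ k : Fin (d + 1),
      (Zmat F d * Emat d q⁻¹ * Zmat F d) i k * Emat d q k j =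
      (if (i : ℕ) = (k : ℕ) then
        (if (k : ℕ) = (j : ℕ) then q ^ (2*((i:ℕ):ℤ)-(d:ℤ)) * q ^ (2*((k:ℕ):ℤ)-(d:ℤ)) else 0) +
        (if (k : ℕ) + 1 = (j : ℕ) then
          q ^ (2*((i:ℕ):ℤ)-(d:ℤ)) * (q ^ (d:ℤ) - q ^ (2*((k:ℕ):ℤ)-(d:ℤ))) else 0)
       else 0) +
      (if (k : ℕ) + 1 = (i : ℕ) then
        (if (k : ℕ) = (j : ℕ) then
          (q ^ (-(d:ℤ)) - q ^ (2*((i:ℕ):ℤ)-(d:ℤ))) * q ^ (2*((k:ℕ):ℤ)-(d:ℤ)) else 0) +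
        (if (k : ℕ) + 1 = (j : ℕ) then
          (q ^ (-(d:ℤ)) - q ^ (2*((i:ℕ):ℤ)-(d:ℤ))) *
            (q ^ (d:ℤ) - q ^ (2*((k:ℕ):ℤ)-(d:ℤ))) else 0)
       else 0) := by
    intro k
    rw [W_eq d q hq, Emat_eq]
    split_ifs <;> ring
  rw [Finset.sum_congr rfl fun k _ => step k, Finset.sum_add_distrib,
      ssum_eq i, ssum_pred i]
  by_cases h1 : 1 ≤ (i : ℕ)
  · rw [dif_pos h1]
    have hv : ((⟨(i : ℕ) - 1, lt_of_le_of_lt (Nat.sub_le _ _) i.isLt⟩ : Fin (d+1)) : ℕ)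
        = (i : ℕ) - 1 := rfl
    rw [hv, show ((((i:ℕ) - 1 : ℕ)) : ℤ) = ((i:ℕ):ℤ) - 1 by omega,
      show (i:ℕ) - 1 + 1 = (i:ℕ) by omega]
    simp only [h1, true_and]
    ring
  · rw [dif_neg h1]
    simp only [h1, false_and, if_false]
    ring

lemma EW_apply (d : ℕ) (q : F) (hq : q ≠ 0) (i j : Fin (d + 1)) :
    (Emat d q * (Zmat F d * Emat d q⁻¹ * Zmat F d)) i j =
      (if (i : ℕ) = (j : ℕ) then
        q ^ (2*((i:ℕ):ℤ)-(d:ℤ)) * q ^ (2*((i:ℕ):ℤ)-(d:ℤ)) else 0) +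
      (if (j : ℕ) + 1 = (i : ℕ) then
        q ^ (2*((i:ℕ):ℤ)-(d:ℤ)) * (q ^ (-(d:ℤ)) - q ^ (2*((i:ℕ):ℤ)-(d:ℤ))) else 0) +
      (if (i : ℕ) < d ∧ (i : ℕ) + 1 = (j : ℕ) then
        (q ^ (d:ℤ) - q ^ (2*((i:ℕ):ℤ)-(d:ℤ))) * q ^ (2*(((i:ℕ):ℤ)+1)-(d:ℤ)) else 0) +
      (if (i : ℕ) < d ∧ (i : ℕ) = (j : ℕ) then
        (q ^ (d:ℤ) - q ^ (2*((i:ℕ):ℤ)-(d:ℤ))) *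
          (q ^ (-(d:ℤ)) - q ^ (2*(((i:ℕ):ℤ)+1)-(d:ℤ))) else 0) := by
  rw [Matrix.mul_apply]
  have step : ∀ k : Fin (d + 1),
      Emat d q i k * (Zmat F d * Emat d q⁻¹ * Zmat F d) k j =
      (if (i : ℕ) = (k : ℕ) then
        (if (k : ℕ) = (j : ℕ) then q ^ (2*((i:ℕ):ℤ)-(d:ℤ)) * q ^ (2*((k:ℕ):ℤ)-(d:ℤ)) else 0) +
        (if (j : ℕ) + 1 = (k : ℕ) then
          q ^ (2*((i:ℕ):ℤ)-(d:ℤ)) * (q ^ (-(d:ℤ)) - q ^ (2*((k:ℕ):ℤ)-(d:ℤ))) else 0)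
       else 0) +
      (if (i : ℕ) + 1 = (k : ℕ) then
        (if (k : ℕ) = (j : ℕ) then
          (q ^ (d:ℤ) - q ^ (2*((i:ℕ):ℤ)-(d:ℤ))) * q ^ (2*((k:ℕ):ℤ)-(d:ℤ)) else 0) +
        (if (j : ℕ) + 1 = (k : ℕ) then
          (q ^ (d:ℤ) - q ^ (2*((i:ℕ):ℤ)-(d:ℤ))) *
            (q ^ (-(d:ℤ)) - q ^ (2*((k:ℕ):ℤ)-(d:ℤ))) else 0)
       else 0) := by
    intro k
    rw [W_eq d q hq, Emat_eq]
    split_ifs <;> ring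
  rw [Finset.sum_congr rfl fun k _ => step k, Finset.sum_add_distrib,
      ssum_eq i, ssum_succ i]
  by_cases h1 : (i : ℕ) < d
  · rw [dif_pos h1]
    have hv : ((⟨(i : ℕ) + 1, by omega⟩ : Fin (d+1)) : ℕ) = (i : ℕ) + 1 := rfl
    rw [hv, show ((((i:ℕ) + 1 : ℕ)) : ℤ) = ((i:ℕ):ℤ) + 1 by omega]
    simp only [show ((j:ℕ) + 1 = (i:ℕ) + 1) ↔ ((i:ℕ) = (j:ℕ)) by omega, h1, true_and]
    ring
  · rw [dif_neg h1]
    simp only [h1, false_and, if_false]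
    ring

lemma rel1 (d : ℕ) (q : F) (hq : q ≠ 0) :
    q • (Emat d q * Kmat d q) - q⁻¹ • (Kmat d q * Emat d q) =
      (q - q⁻¹) • (1 : Matrix (Fin (d + 1)) (Fin (d + 1)) F) := by
  ext i j
  simp only [Matrix.sub_apply, Matrix.smul_apply, smul_eq_mul, Matrix.one_apply, Fin.ext_iff,
    Kmat, Matrix.mul_diagonal, Matrix.diagonal_mul, Emat_eq]
  split_ifs <;>
  first
  | exact (by omega : False).elim
  | (simp only [add_zero, zero_add, mul_one, mul_zero]
     first
     | exact key_diag q hq _ _ _ _ (by omega) (by omega)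
     | exact key_cross q hq _ _ _ (by omega)
     | exact key_cross' q hq _ _ _ (by omega)
     | ring)

lemma rel2 (d : ℕ) (q : F) (hq : q ≠ 0) :
    q • (Kmat d q * (Zmat F d * Emat d q⁻¹ * Zmat F d)) -
      q⁻¹ • ((Zmat F d * Emat d q⁻¹ * Zmat F d) * Kmat d q) =
      (q - q⁻¹) • (1 : Matrix (Fin (d + 1)) (Fin (d + 1)) F) := by
  ext i j
  simp only [Matrix.sub_apply, Matrix.smul_apply, smul_eq_mul, Matrix.one_apply, Fin.ext_iff,
    Kmat, Matrix.mul_diagonal, Matrix.diagonal_mul, W_eq d q hq]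
  split_ifs <;>
  first
  | exact (by omega : False).elim
  | (simp only [add_zero, zero_add, mul_one, mul_zero]
     first
     | exact key_diag q hq _ _ _ _ (by omega) (by omega)
     | exact key_cross q hq _ _ _ (by omega)
     | exact key_cross' q hq _ _ _ (by omega)
     | ring)

lemma rel3 (d : ℕ) (hd : 1 ≤ d) (q : F) (hq : q ≠ 0) :
    q • ((Zmat F d * Emat d q⁻¹ * Zmat F d) * Emat d q) -
      q⁻¹ • (Emat d q * (Zmat F d * Emat d q⁻¹ * Zmat F d)) =
      (q - q⁻¹) • (1 : Matrix (Fin (d + 1)) (Fin (d + 1)) F) := by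
  ext i j
  have hi := i.isLt
  have hj := j.isLt
  simp only [Matrix.sub_apply, Matrix.smul_apply, smul_eq_mul, Matrix.one_apply, Fin.ext_iff]
  rw [WE_apply d q hq, EW_apply d q hq]
  split_ifs <;>
  first
  | exact (by omega : False).elim
  | (simp only [add_zero, zero_add, mul_one, mul_zero]
     first
     | exact key_diag q hq _ _ _ _ (by omega) (by omega)
     | exact key_cross q hq _ _ _ (by omega)
     | exact key_cross' q hq _ _ _ (by omega)
     | exact key3_mid q hq d _ _ _ (by omega) (by omega)
     | exact key3_left q hq d _ _ (by omega) (by omega)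
     | exact key3_right q hq d _ _ (by omega) (by omega)
     | ring)

end Stmt15

theorem stmt_15 {F : Type*} [Field F] (d : ℕ) (hd : 1 ≤ d) (q : F) (hq : q ≠ 0)
    (hroot : ∀ n : ℕ, 0 < n → q ^ n ≠ 1) :
    (q - q⁻¹)⁻¹ • (q • (Emat d q * Kmat d q) - q⁻¹ • (Kmat d q * Emat d q)) = 1 ∧
      (q - q⁻¹)⁻¹ • (q • (Kmat d q * (Zmat F d * Emat d q⁻¹ * Zmat F d)) -
        q⁻¹ • ((Zmat F d * Emat d q⁻¹ * Zmat F d) * Kmat d q)) = 1 ∧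
      (q - q⁻¹)⁻¹ • (q • ((Zmat F d * Emat d q⁻¹ * Zmat F d) * Emat d q) -
        q⁻¹ • (Emat d q * (Zmat F d * Emat d q⁻¹ * Zmat F d))) = 1 := by
  have hq2 : q ^ 2 ≠ 1 := hroot 2 two_pos
  have hsub : q - q⁻¹ ≠ 0 := by
    intro h
    rw [sub_eq_zero] at h
    exact hq2 (by rw [sq]; nth_rewrite 2 [h]; exact mul_inv_cancel₀ hq)
  refine ⟨?_, ?_, ?_⟩
  · rw [Stmt15.rel1 d q hq, smul_smul, inv_mul_cancel₀ hsub, one_smul]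
  · rw [Stmt15.rel2 d q hq, smul_smul, inv_mul_cancel₀ hsub, one_smul]
  · rw [Stmt15.rel3 d hd q hq, smul_smul, inv_mul_cancel₀ hsub, one_smul]
end

section
/- Let F be a field with q ∈ F nonzero, q² ≠ 1, and let A be an associative F-algebra with elements x₀₁, x₁₂, x₂₃, x₃₀ and a central scalar action, together with t ∈ F nonzero and Υ ∈ A central, satisfying: (q x₀₁ x₁₂ - q⁻¹ x₁₂ x₀₁)/(q-q⁻¹) = 1, (q x₃₀ x₀₁ - q⁻¹ x₀₁ x₃₀)/(q-q⁻¹) = 1, and Υ = (q+q⁻¹) x₃₀ + t·((q x₀₁ x₂₃ - q⁻¹ x₂₃ x₀₁)/(q-q⁻¹) - 1). Then x₀₁² x₂₃ - (q²+q⁻²) x₀₁ x₂₃ x₀₁ + x₂₃ x₀₁² = -(q-q⁻¹)² (1 + t⁻¹ Υ) x₀₁ + (q-q⁻¹)(q²-q⁻²) t⁻¹. -/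
set_option maxHeartbeats 2000000

theorem stmt_16 {F : Type*} [Field F] {A : Type*} [Ring A] [Algebra F A]
    (q : F) (hq : q ≠ 0) (hq2 : q ^ 2 ≠ 1) (hq4 : q ^ 4 ≠ 1)
    (t : F) (ht : t ≠ 0)
    (x01 x12 x23 x30 : A) (Υ : A) (hcentral : ∀ a : A, Υ * a = a * Υ)
    (h1 : (q - q⁻¹)⁻¹ • (q • (x01 * x12) - q⁻¹ • (x12 * x01)) = 1)
    (h2 : (q - q⁻¹)⁻¹ • (q • (x30 * x01) - q⁻¹ • (x01 * x30)) = 1)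
    (hups : Υ = (q + q⁻¹) • x30 +
      t • ((q - q⁻¹)⁻¹ • (q • (x01 * x23) - q⁻¹ • (x23 * x01)) - 1)) :
    x01 ^ 2 * x23 - (q ^ 2 + q⁻¹ ^ 2) • (x01 * x23 * x01) + x23 * x01 ^ 2 =
      -((q - q⁻¹) ^ 2) • (((1 : A) + t⁻¹ • Υ) * x01) +
        ((q - q⁻¹) * (q ^ 2 - q⁻¹ ^ 2) * t⁻¹) • (1 : A) := by
  have hd : q - q⁻¹ ≠ 0 := by
    intro h
    apply hq2
    have h' : q = q⁻¹ := sub_eq_zero.mp h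
    rw [pow_two]
    nth_rewrite 2 [h']
    exact mul_inv_cancel₀ hq
  have ha : q • (x30 * x01) - q⁻¹ • (x01 * x30) = (q - q⁻¹) • (1 : A) := by
    have h' := congrArg (fun z : A => (q - q⁻¹) • z) h2
    simpa [smul_smul, mul_inv_cancel₀ hd] using h'
  have hC : (q - q⁻¹) • ((q - q⁻¹)⁻¹ • (q • (x01 * x23) - q⁻¹ • (x23 * x01))) =
      q • (x01 * x23) - q⁻¹ • (x23 * x01) := smul_inv_smul₀ hd _
  set C := (q - q⁻¹)⁻¹ • (q • (x01 * x23) - q⁻¹ • (x23 * x01)) with hCdef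
  have hCl : (q - q⁻¹) • (x01 * C) = q • (x01 * (x01 * x23)) - q⁻¹ • (x01 * (x23 * x01)) := by
    rw [← mul_smul_comm, hC, mul_sub, mul_smul_comm, mul_smul_comm]
  have hCr : (q - q⁻¹) • (C * x01) = q • (x01 * x23 * x01) - q⁻¹ • (x23 * x01 * x01) := by
    rw [← smul_mul_assoc, hC, sub_mul, smul_mul_assoc, smul_mul_assoc]
  rw [← sub_eq_zero]
  rw [show (0 : A) =
      ((q + q⁻¹) * (q - q⁻¹) * t⁻¹) •
        (q • (x30 * x01) - q⁻¹ • (x01 * x30) - (q - q⁻¹) • (1 : A)) +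
      (-(q⁻¹ * (q - q⁻¹) * t⁻¹)) • (Υ * x01 - x01 * Υ) +
      (-q⁻¹) • ((q - q⁻¹) • (x01 * C) -
        (q • (x01 * (x01 * x23)) - q⁻¹ • (x01 * (x23 * x01)))) +
      q • ((q - q⁻¹) • (C * x01) -
        (q • (x01 * x23 * x01) - q⁻¹ • (x23 * x01 * x01))) from by
    rw [sub_eq_zero_of_eq ha, sub_eq_zero_of_eq (hcentral x01),
      sub_eq_zero_of_eq hCl, sub_eq_zero_of_eq hCr]; simp]
  rw [hups]
  simp only [add_mul, mul_add, sub_mul, mul_sub, smul_mul_assoc, mul_smul_comm,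
    one_mul, mul_one, mul_assoc, pow_two, smul_sub, smul_add, smul_smul]
  have hiq : q * q⁻¹ = 1 := mul_inv_cancel₀ hq
  have hit : t * t⁻¹ = 1 := mul_inv_cancel₀ ht
  match_scalars
  · linear_combination (-1 : F) * hiq
  · ring
  · linear_combination (-1 : F) * hiq
  · linear_combination (-2 + 2 * t * t⁻¹) * hiq + (2 - q⁻¹ ^ 2 - q ^ 2) * hit
  · ring
  · linear_combination (1 - t * t⁻¹) * hiq + (-1 + q ^ 2) * hit
  · ring
  · ring
  · linear_combination (1 - t * t⁻¹) * hiq + (-1 + q⁻¹ ^ 2) * hit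
end
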